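/- arXiv:1804.07107 — 2 statements merged into one kernel-verified Lean document; each statement's English description precedes it below -/
import Mathlib

section
/- Let G be a generic symmetric cost-sharing game with n players whose delay functions are of the form d_r(x) = a_r/x + b_r with a_r, b_r ≥ 0. Then the k-Lookahead Price of Anarchy of G is nonincreasing in k: for every k with 2 ≤ k ≤ n, k-LPoA(G) ≤ (k−1)-LPoA(G). -/
/-- A congestion game with `n` players on a finite resource type `R`:
each player has a finite set of actions (each action a set of resources),
and each resource has a delay function `ℕ → ℝ`. -/
structure CGame (R : Type) [DecidableEq R] [Fintype R] (n : ℕ) where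
  actions : Fin n → Finset (Finset R)
  delay : R → ℕ → ℝ

namespace CGame

variable {R : Type} [DecidableEq R] [Fintype R] {n : ℕ}

/-- The congestion `x(A)_r`: number of players using resource `r` in profile `A`. -/
def congestion (_G : CGame R n) (A : Fin n → Finset R) (r : R) : ℕ :=
  (Finset.univ.filter fun i => r ∈ A i).card

/-- The cost of player `i` in profile `A`. -/
def cost (G : CGame R n) (A : Fin n → Finset R) (i : Fin n) : ℝ :=
  ∑ r ∈ A i, G.delay r (G.congestion A r)

/-- `A` is an outcome: each player plays one of his actions. -/
def IsOutcome (G : CGame R n) (A : Fin n → Finset R) : Prop :=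
  ∀ i, A i ∈ G.actions i

/-- `A` is a (pure) Nash equilibrium. -/
def IsNash (G : CGame R n) (A : Fin n → Finset R) : Prop :=
  G.IsOutcome A ∧ ∀ i, ∀ B ∈ G.actions i, G.cost A i ≤ G.cost (Function.update A i B) i

/-- The subgame induced by the first player playing `a`. -/
def subgame (G : CGame R (n + 1)) (a : Finset R) : CGame R n where
  actions := fun i => G.actions i.succ
  delay := fun r y => G.delay r (y + if r ∈ a then 1 else 0)

/-- The subgame induced by the first `m` players playing `P`. -/
def subgameMany {m k : ℕ} (G : CGame R (m + k)) (P : Fin m → Finset R) : CGame R k where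
  actions := fun i => G.actions (Fin.natAdd m i)
  delay := fun r y => G.delay r (y + (Finset.univ.filter fun i : Fin m => r ∈ P i).card)

/-- `G^k`: the game on the first `min k n` players. -/
def truncate (G : CGame R n) (k : ℕ) : CGame R (min k n) where
  actions := fun i => G.actions (Fin.castLE (min_le_right k n) i)
  delay := G.delay

/-- The game reordered so that the player in position `i` is player `σ i`. -/
def reorder (G : CGame R n) (σ : Equiv.Perm (Fin n)) : CGame R n where
  actions := fun i => G.actions (σ i)
  delay := G.delay

/-- Subgame-perfect outcomes with respect to the order `1, …, n`. -/
def IsSPO : {n : ℕ} → CGame R n → (Fin n → Finset R) → Prop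
  | 0, _, _ => True
  | _ + 1, G, A =>
      A 0 ∈ G.actions 0 ∧
      ∃ f : Finset R → (Fin _ → Finset R),
        (∀ a ∈ G.actions 0, IsSPO (G.subgame a) (f a)) ∧
        f (A 0) = Fin.tail A ∧
        ∀ a ∈ G.actions 0,
          G.cost (Fin.cons (A 0) (f (A 0))) 0 ≤ G.cost (Fin.cons a (f a)) 0

/-- `k`-lookahead outcomes with respect to the order `1, …, n`. -/
def IsKLA (k : ℕ) : {n : ℕ} → CGame R n → (Fin n → Finset R) → Prop
  | 0, _, _ => True
  | n + 1, G, A =>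
      (∃ (hk : 0 < min k (n + 1)) (B : Fin (min k (n + 1)) → Finset R),
          IsSPO (G.truncate k) B ∧ B ⟨0, hk⟩ = A 0) ∧
      IsKLA k (G.subgame (A 0)) (Fin.tail A)

/-- `A` is a subgame-perfect outcome of `G` with respect to some order of the players. -/
def IsSPOutcome (G : CGame R n) (A : Fin n → Finset R) : Prop :=
  ∃ σ : Equiv.Perm (Fin n), IsSPO (G.reorder σ) (A ∘ σ)

/-- `A` is a `k`-lookahead outcome of `G` with respect to some order of the players. -/
def IsKLO (k : ℕ) (G : CGame R n) (A : Fin n → Finset R) : Prop :=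
  ∃ σ : Equiv.Perm (Fin n), IsKLA k (G.reorder σ) (A ∘ σ)

/-- The cost of player `i` when only the players in `s` play (profile restricted to `s`). -/
def costOn (G : CGame R n) (s : Finset (Fin n)) (A : Fin n → Finset R) (i : Fin n) : ℝ :=
  ∑ r ∈ A i, G.delay r ((s.filter fun j => r ∈ A j).card)

/-- `G` is generic: in every restriction of the game to a subset of the players,
a player's cost changes whenever his own action changes. -/
def Generic (G : CGame R n) : Prop :=
  ∀ s : Finset (Fin n), ∀ A B : Fin n → Finset R,
    (∀ i ∈ s, A i ∈ G.actions i) → (∀ i ∈ s, B i ∈ G.actions i) →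
    ∀ j ∈ s, A j ≠ B j → G.costOn s A j ≠ G.costOn s B j

/-- Utilitarian social cost. -/
def SC (G : CGame R n) (A : Fin n → Finset R) : ℝ :=
  ∑ i, G.cost A i

/-- Minimum social cost over all outcomes. -/
noncomputable def optSC (G : CGame R n) : ℝ :=
  sInf {y | ∃ A, G.IsOutcome A ∧ y = G.SC A}

/-- The `k`-Lookahead Price of Anarchy. -/
noncomputable def kLPoA (G : CGame R n) (k : ℕ) : ℝ :=
  sSup {y | ∃ A, IsKLO k G A ∧ y = G.SC A / G.optSC}

/-- The Price of Anarchy. -/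
noncomputable def PoA (G : CGame R n) : ℝ :=
  sSup {y | ∃ A, G.IsNash A ∧ y = G.SC A / G.optSC}

/-- Opportunity cost `O_A` of an outcome `A` in a symmetric game with action set `𝒜`. -/
noncomputable def oppCost (G : CGame R n) (𝒜 : Finset (Finset R)) (A : Fin n → Finset R) : ℝ :=
  sInf {y | ∃ P ∈ 𝒜, y = ∑ r ∈ P, G.delay r (G.congestion A r + 1)}

/-- Worst cost (egalitarian social cost) `W_A` of an outcome `A`. -/
noncomputable def worstCost (G : CGame R n) (A : Fin n → Finset R) : ℝ :=
  sSup {y | ∃ i, y = G.cost A i}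

/-- Rosenthal's potential function. -/
def potential (G : CGame R n) (A : Fin n → Finset R) : ℝ :=
  ∑ r : R, ∑ i ∈ Finset.Icc 1 (G.congestion A r), G.delay r i

end CGame

/-! In a generic symmetric cost-sharing game, subgame-perfect play on top of a load `c` left by
earlier players is herding: with `m` players to move, all of them play the action `P` minimising
`∑ r ∈ P, d r (c r + m)`. The leader can secure this cost, since the followers herd onto his
action, and no action can do better because delays are nonincreasing; genericity makes the
minimiser unique. Applying this window by window, the only `k`-lookahead outcome has everybody
play the minimiser `P_k` of `∑ r ∈ P, d r (min k n)`, with social cost `n * ∑ r ∈ P_k, d r n`.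
For `d r x = a r / x + b r` the cost difference of `P_k` and `P_{k-1}` at congestion `x` has the
form `α / x + β`; it is `≤ 0` at `x = k` and `≥ 0` at `x = k - 1`, which forces `α ≥ 0`, hence
it is `≤ 0` at `x = n` as well. -/

theorem div_add_nonpos_of_sign_change {α β s t u : ℝ} (hs : 0 < s) (hst : s < t) (htu : t ≤ u)
    (hs' : 0 ≤ α / s + β) (ht : α / t + β ≤ 0) : α / u + β ≤ 0 := by
  have hα : 0 ≤ α := by
    by_contra! hα
    linarith [div_lt_div_of_pos_left (neg_pos.2 hα) hs hst, neg_div t α, neg_div s α]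
  linarith [div_le_div_of_nonneg_left hα (hs.trans hst) htu]

theorem Fin.eq_const_iff_head_tail {α : Type*} {m : ℕ} (A : Fin (m + 1) → α) (x : α) :
    A = (fun _ => x) ↔ A 0 = x ∧ Fin.tail A = fun _ => x := by
  refine ⟨by rintro rfl; exact ⟨rfl, rfl⟩, fun ⟨h0, ht⟩ => ?_⟩
  rw [← Fin.cons_self_tail A, h0, ht]
  funext i
  exact Fin.cases rfl (fun _ => rfl) i

namespace CGame

open Finset

section Games

variable {R : Type} [DecidableEq R] [Fintype R] {n : ℕ}

theorem SC_const (G : CGame R n) (P : Finset R) :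
    G.SC (fun _ => P) = n * ∑ r ∈ P, G.delay r n := by
  have hcost : ∀ i, G.cost (fun _ => P) i = ∑ r ∈ P, G.delay r n := fun i =>
    sum_congr rfl fun r hr => by simp [congestion, hr]
  simp [SC, hcost]

theorem optSC_nonneg (G : CGame R n) (hG : ∀ r m, 0 ≤ G.delay r m) : 0 ≤ G.optSC := by
  refine Real.sInf_nonneg ?_
  rintro _ ⟨A, -, rfl⟩
  exact sum_nonneg fun i _ => sum_nonneg fun r _ => hG r _

theorem costOn_piecewise (G : CGame R n) {s u : Finset (Fin n)} (hsu : Disjoint s u)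
    (X : Finset R) (g : Fin n → Finset R) {j : Fin n} (hj : j ∈ u) :
    G.costOn (s ∪ u) (u.piecewise (fun _ => X) g) j =
      ∑ r ∈ X, G.delay r (#{i ∈ s | r ∈ g i} + #u) := by
  rw [costOn, piecewise_eq_of_mem _ _ _ hj]
  refine sum_congr rfl fun r hr => ?_
  have hs : {i ∈ s | r ∈ u.piecewise (fun _ => X) g i} = {i ∈ s | r ∈ g i} :=
    filter_congr fun i hi => by rw [piecewise_eq_of_notMem _ _ _ (disjoint_left.1 hsu hi)]
  have hu : {i ∈ u | r ∈ u.piecewise (fun _ => X) g i} = u :=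
    filter_true_of_mem fun i hi => by rwa [piecewise_eq_of_mem _ _ _ hi]
  rw [filter_union, card_union_of_disjoint (disjoint_filter_filter hsu), hs, hu]

end Games

section Herding

variable {R : Type} (𝒜 : Finset (Finset R)) (d : R → ℕ → ℝ)

def sharedCost (c : R → ℕ) (t : ℕ) (P : Finset R) : ℝ :=
  ∑ r ∈ P, d r (c r + t)

noncomputable def herdAction (h𝒜 : 𝒜.Nonempty) (c : R → ℕ) (t : ℕ) : Finset R :=
  (exists_min_image 𝒜 (sharedCost d c t) h𝒜).choose

variable {𝒜 d} (h𝒜 : 𝒜.Nonempty) {c : R → ℕ} {t : ℕ}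

theorem sharedCost_zero (P : Finset R) : sharedCost d 0 t P = ∑ r ∈ P, d r t := by
  simp [sharedCost]

theorem herdAction_mem : herdAction 𝒜 d h𝒜 c t ∈ 𝒜 :=
  (exists_min_image 𝒜 (sharedCost d c t) h𝒜).choose_spec.1

theorem sharedCost_herdAction_le {Q : Finset R} (hQ : Q ∈ 𝒜) :
    sharedCost d c t (herdAction 𝒜 d h𝒜 c t) ≤ sharedCost d c t Q :=
  (exists_min_image 𝒜 (sharedCost d c t) h𝒜).choose_spec.2 Q hQ

theorem herdAction_eq_of_forall_lt {P : Finset R} (hP : P ∈ 𝒜)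
    (h : ∀ Q ∈ 𝒜, Q ≠ P → sharedCost d c t P < sharedCost d c t Q) :
    herdAction 𝒜 d h𝒜 c t = P := by
  by_contra hne
  exact (sharedCost_herdAction_le h𝒜 hP).not_gt (h _ (herdAction_mem h𝒜) hne)

variable [DecidableEq R]

def addAction (c : R → ℕ) (a : Finset R) : R → ℕ :=
  fun r => c r + if r ∈ a then 1 else 0

def herdLoad (P : Finset R) (i : ℕ) : R → ℕ :=
  fun r => if r ∈ P then i else 0

theorem herdLoad_zero (P : Finset R) : herdLoad P 0 = 0 := by
  funext r
  simp [herdLoad]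

theorem addAction_herdLoad (P : Finset R) (i : ℕ) :
    addAction (herdLoad P i) P = herdLoad P (i + 1) := by
  funext r
  by_cases hr : r ∈ P <;> simp [addAction, herdLoad, hr]

/-- Genericity only constrains loads that some players of the `n`-player game can cause while
`t` further players remain to move. -/
def IsRealizableLoad (𝒜 : Finset (Finset R)) (n t : ℕ) (c : R → ℕ) : Prop :=
  ∃ (s : Finset (Fin n)) (g : Fin n → Finset R),
    (∀ i ∈ s, g i ∈ 𝒜) ∧ #s + t ≤ n ∧ ∀ r, c r = #{i ∈ s | r ∈ g i}

variable {n : ℕ}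

theorem isRealizableLoad_zero (ht : t ≤ n) : IsRealizableLoad 𝒜 n t 0 :=
  ⟨∅, fun _ => ∅, by simp, by simpa using ht, by simp⟩

theorem isRealizableLoad_addAction {a : Finset R}
    (hc : IsRealizableLoad 𝒜 n (t + 1) c) (ha : a ∈ 𝒜) :
    IsRealizableLoad 𝒜 n t (addAction c a) := by
  obtain ⟨s, g, hg, hcard, hc⟩ := hc
  obtain ⟨x, -, hx⟩ := exists_mem_notMem_of_card_lt_card (s := s) (t := univ)
    (by rw [card_univ, Fintype.card_fin]; omega)
  have hgx : ∀ i ∈ s, Function.update g x a i = g i := fun i hi =>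
    Function.update_of_ne (ne_of_mem_of_not_mem hi hx) _ _
  refine ⟨insert x s, Function.update g x a, ?_, ?_, fun r => ?_⟩
  · simp only [forall_mem_insert, Function.update_self, ha, true_and]
    exact fun i hi => (hgx i hi).symm ▸ hg i hi
  · rw [card_insert_of_notMem hx]
    omega
  · rw [filter_insert, filter_congr fun i hi => by rw [hgx i hi], addAction, hc r]
    by_cases hr : r ∈ a <;> simp [hr, hx]

theorem isRealizableLoad_herdLoad {P : Finset R} (hP : P ∈ 𝒜) :
    ∀ {i t : ℕ}, i + t ≤ n → IsRealizableLoad 𝒜 n t (herdLoad P i)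
  | 0, _, h => by
    rw [herdLoad_zero]
    exact isRealizableLoad_zero (by omega)
  | i + 1, _, h => by
    rw [← addAction_herdLoad]
    exact isRealizableLoad_addAction (isRealizableLoad_herdLoad hP (by omega)) hP

theorem sharedCost_addAction_self {m : ℕ} {a : Finset R} :
    sharedCost d (addAction c a) m a = sharedCost d c (m + 1) a :=
  sum_congr rfl fun r hr => by simp only [addAction, if_pos hr]; ring_nf

theorem sharedCost_le_sharedCost_addAction (hanti : ∀ r, Antitone (d r)) {m : ℕ}
    {a q : Finset R} : sharedCost d c (m + 1) q ≤ sharedCost d (addAction c a) m q := by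
  refine sum_le_sum fun r _ => hanti r ?_
  simp only [addAction]
  split_ifs <;> omega

end Herding

section Symmetric

variable {R : Type} [DecidableEq R] [Fintype R] (𝒜 : Finset (Finset R)) (d : R → ℕ → ℝ)
  {n : ℕ}

/-- The symmetric game of `m` players in which, besides them, `c r` players use resource `r`. -/
def loaded (c : R → ℕ) (m : ℕ) : CGame R m :=
  ⟨fun _ => 𝒜, fun r y => d r (y + c r)⟩

variable {𝒜 d} {c : R → ℕ} {m t : ℕ}

theorem loaded_zero : loaded 𝒜 d 0 n = ⟨fun _ => 𝒜, d⟩ := by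
  simp [loaded]

theorem loaded_subgame (a : Finset R) :
    (loaded 𝒜 d c (m + 1)).subgame a = loaded 𝒜 d (addAction c a) m := by
  simp only [loaded, subgame, addAction, mk.injEq, true_and]
  funext r y
  ring_nf

theorem loaded_truncate (k : ℕ) :
    (loaded 𝒜 d c m).truncate k = loaded 𝒜 d c (min k m) :=
  rfl

theorem cost_loaded_cons_const (a q : Finset R) :
    (loaded 𝒜 d c (m + 1)).cost (Fin.cons a fun _ => q) 0 =
      ∑ r ∈ a, d r (1 + (if r ∈ q then m else 0) + c r) := by
  refine sum_congr rfl fun r hr => ?_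
  have hcong : (loaded 𝒜 d c (m + 1)).congestion (Fin.cons a fun _ => q) r =
      1 + if r ∈ q then m else 0 := by
    simp only [congestion, card_filter, Fin.sum_univ_succ, Fin.cons_zero, Fin.cons_succ, hr]
    split_ifs <;> simp
  rw [hcong]
  rfl

theorem cost_loaded_cons_self (a : Finset R) :
    (loaded 𝒜 d c (m + 1)).cost (Fin.cons a fun _ => a) 0 = sharedCost d c (m + 1) a := by
  rw [cost_loaded_cons_const]
  refine sum_congr rfl fun r hr => ?_
  rw [if_pos hr]
  ring_nf

theorem sharedCost_le_cost_loaded_cons (hanti : ∀ r, Antitone (d r)) {a q : Finset R} :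
    sharedCost d c (m + 1) a ≤ (loaded 𝒜 d c (m + 1)).cost (Fin.cons a fun _ => q) 0 := by
  rw [cost_loaded_cons_const]
  refine sum_le_sum fun r _ => hanti r ?_
  split_ifs <;> omega

theorem Generic.injOn_sharedCost (hgen : Generic (⟨fun _ => 𝒜, d⟩ : CGame R n))
    (hc : IsRealizableLoad 𝒜 n t c) (ht : 1 ≤ t) : Set.InjOn (sharedCost d c t) 𝒜 := by
  intro P hP Q hQ hPQ
  by_contra hne
  -- `t` fresh players `u` join the players `s` causing `c`; genericity is applied to one of them.
  obtain ⟨s, g, hg, hcard, hc⟩ := hc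
  obtain ⟨u, hus, hu⟩ := exists_subset_card_eq (s := sᶜ) (n := t)
    (by rw [card_compl, Fintype.card_fin]; omega)
  obtain ⟨j, hj⟩ : u.Nonempty := card_pos.1 (by omega)
  have hsu : Disjoint s u := disjoint_of_subset_right hus disjoint_compl_right
  have hcost : ∀ X, costOn ⟨fun _ => 𝒜, d⟩ (s ∪ u) (u.piecewise (fun _ => X) g) j =
      sharedCost d c t X := fun X => by
    rw [costOn_piecewise _ hsu X g hj, hu]
    simp only [sharedCost, hc]
  have hmem : ∀ X ∈ 𝒜, ∀ i ∈ s ∪ u, u.piecewise (fun _ => X) g i ∈ 𝒜 := fun X hX i hi => by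
    by_cases hiu : i ∈ u
    · rwa [piecewise_eq_of_mem _ _ _ hiu]
    · rw [piecewise_eq_of_notMem _ _ _ hiu]
      exact hg i ((mem_union.1 hi).resolve_right hiu)
  refine hgen (s ∪ u) _ _ (hmem P hP) (hmem Q hQ) j (mem_union_right _ hj) ?_ ?_
  · simpa only [piecewise_eq_of_mem _ _ _ hj] using hne
  · rw [hcost, hcost]
    exact hPQ

theorem Generic.sharedCost_herdAction_lt (hgen : Generic (⟨fun _ => 𝒜, d⟩ : CGame R n))
    (h𝒜 : 𝒜.Nonempty) (hc : IsRealizableLoad 𝒜 n t c) (ht : 1 ≤ t) {Q : Finset R} (hQ : Q ∈ 𝒜)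
    (hne : Q ≠ herdAction 𝒜 d h𝒜 c t) :
    sharedCost d c t (herdAction 𝒜 d h𝒜 c t) < sharedCost d c t Q :=
  (sharedCost_herdAction_le h𝒜 hQ).lt_of_ne fun h =>
    hne (hgen.injOn_sharedCost hc ht (herdAction_mem h𝒜) hQ h).symm

theorem Generic.herdAction_addAction_herdAction (hgen : Generic (⟨fun _ => 𝒜, d⟩ : CGame R n))
    (h𝒜 : 𝒜.Nonempty) (hanti : ∀ r, Antitone (d r)) (hc : IsRealizableLoad 𝒜 n (m + 1) c) :
    herdAction 𝒜 d h𝒜 (addAction c (herdAction 𝒜 d h𝒜 c (m + 1))) m =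
      herdAction 𝒜 d h𝒜 c (m + 1) := by
  refine herdAction_eq_of_forall_lt h𝒜 (herdAction_mem h𝒜) fun Q hQ hne => ?_
  calc _ = sharedCost d c (m + 1) (herdAction 𝒜 d h𝒜 c (m + 1)) :=
        sharedCost_addAction_self
    _ < sharedCost d c (m + 1) Q := hgen.sharedCost_herdAction_lt h𝒜 hc (by omega) hQ hne
    _ ≤ _ := sharedCost_le_sharedCost_addAction hanti

theorem Generic.isSPO_loaded_iff (hgen : Generic (⟨fun _ => 𝒜, d⟩ : CGame R n))
    (h𝒜 : 𝒜.Nonempty) (hanti : ∀ r, Antitone (d r)) :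
    ∀ {m : ℕ} {c : R → ℕ}, IsRealizableLoad 𝒜 n m c →
      ∀ A : Fin m → Finset R, IsSPO (loaded 𝒜 d c m) A ↔ A = fun _ => herdAction 𝒜 d h𝒜 c m
  | 0, _, _, _ => iff_of_true trivial (Subsingleton.elim _ _)
  | m + 1, c, hc, A => by
    set P := herdAction 𝒜 d h𝒜 c (m + 1)
    let F : Finset R → Fin m → Finset R := fun a _ => herdAction 𝒜 d h𝒜 (addAction c a) m
    have hsub : ∀ a ∈ 𝒜, ∀ B, IsSPO ((loaded 𝒜 d c (m + 1)).subgame a) B ↔ B = F a :=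
      fun a ha B => by
        rw [loaded_subgame]
        exact hgen.isSPO_loaded_iff h𝒜 hanti (isRealizableLoad_addAction hc ha) B
    have hFP : F P = fun _ => P :=
      funext fun _ => hgen.herdAction_addAction_herdAction h𝒜 hanti hc
    have hcostP :
        (loaded 𝒜 d c (m + 1)).cost (Fin.cons P (F P)) 0 = sharedCost d c (m + 1) P := by
      rw [hFP, cost_loaded_cons_self]
    constructor
    · rintro ⟨hA0, f, hf, hftail, hopt⟩
      have hfF : ∀ a ∈ 𝒜, f a = F a := fun a ha => (hsub a ha _).1 (hf a ha)
      have h0 : A 0 = P := by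
        by_contra hne
        refine (hgen.sharedCost_herdAction_lt h𝒜 hc (by omega) hA0 hne).not_ge ?_
        calc sharedCost d c (m + 1) (A 0)
            ≤ (loaded 𝒜 d c (m + 1)).cost (Fin.cons (A 0) (F (A 0))) 0 :=
              sharedCost_le_cost_loaded_cons hanti
          _ ≤ (loaded 𝒜 d c (m + 1)).cost (Fin.cons P (F P)) 0 := by
              rw [← hfF _ hA0, ← hfF _ (herdAction_mem h𝒜)]
              exact hopt P (herdAction_mem h𝒜)
          _ = sharedCost d c (m + 1) P := hcostP
      rw [Fin.eq_const_iff_head_tail]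
      exact ⟨h0, by rw [← hftail, hfF _ hA0, h0, hFP]⟩
    · rintro rfl
      refine ⟨herdAction_mem h𝒜, F, fun a ha => (hsub a ha _).2 rfl, hFP, fun a ha => ?_⟩
      calc (loaded 𝒜 d c (m + 1)).cost (Fin.cons P (F P)) 0
            = sharedCost d c (m + 1) P := hcostP
        _ ≤ sharedCost d c (m + 1) a := sharedCost_herdAction_le h𝒜 ha
        _ ≤ _ := sharedCost_le_cost_loaded_cons hanti

/-- Used with `t₀ = min k n` and `t = min k (n - i)`: once `i` players have herded onto the
action chosen by the first window, every later window herds onto it as well. -/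
theorem Generic.herdAction_herdLoad (hgen : Generic (⟨fun _ => 𝒜, d⟩ : CGame R n))
    (h𝒜 : 𝒜.Nonempty) (hanti : ∀ r, Antitone (d r)) {t₀ t i : ℕ}
    (ht₀ : 1 ≤ t₀) (ht₀n : t₀ ≤ n) (htt₀ : t ≤ t₀) (ht₀i : t₀ ≤ i + t) :
    herdAction 𝒜 d h𝒜 (herdLoad (herdAction 𝒜 d h𝒜 0 t₀) i) t = herdAction 𝒜 d h𝒜 0 t₀ := by
  set P := herdAction 𝒜 d h𝒜 0 t₀
  refine herdAction_eq_of_forall_lt h𝒜 (herdAction_mem h𝒜) fun Q hQ hne => ?_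
  have h₀ := hgen.sharedCost_herdAction_lt h𝒜 (isRealizableLoad_zero ht₀n) ht₀ hQ hne
  rw [sharedCost_zero, sharedCost_zero, ← sub_pos, ← sum_sdiff_sub_sum_sdiff] at h₀
  rw [← sub_pos, sharedCost, sharedCost, ← sum_sdiff_sub_sum_sdiff]
  have hQP : ∑ r ∈ Q \ P, d r t₀ ≤ ∑ r ∈ Q \ P, d r (herdLoad P i r + t) :=
    sum_le_sum fun r hr => hanti r (by simp [herdLoad, (mem_sdiff.1 hr).2, htt₀])
  have hPQ : ∑ r ∈ P \ Q, d r (herdLoad P i r + t) ≤ ∑ r ∈ P \ Q, d r t₀ :=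
    sum_le_sum fun r hr => hanti r (by simp [herdLoad, (mem_sdiff.1 hr).1, ht₀i])
  linarith

theorem Generic.isKLA_loaded_herdLoad_iff (hgen : Generic (⟨fun _ => 𝒜, d⟩ : CGame R n))
    (h𝒜 : 𝒜.Nonempty) (hanti : ∀ r, Antitone (d r)) {k : ℕ} (hk : 1 ≤ k) :
    ∀ {m i : ℕ}, i + m = n → ∀ A : Fin m → Finset R,
      IsKLA k (loaded 𝒜 d (herdLoad (herdAction 𝒜 d h𝒜 0 (min k n)) i) m) A ↔
        A = fun _ => herdAction 𝒜 d h𝒜 0 (min k n)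
  | 0, _, _, _ => iff_of_true trivial (Subsingleton.elim _ _)
  | m + 1, i, hi, A => by
    set P := herdAction 𝒜 d h𝒜 0 (min k n)
    have hPi : herdAction 𝒜 d h𝒜 (herdLoad P i) (min k (m + 1)) = P :=
      hgen.herdAction_herdLoad h𝒜 hanti (by omega) (by omega) (by omega) (by omega)
    have hP : P ∈ 𝒜 := herdAction_mem h𝒜
    have hSPO := hgen.isSPO_loaded_iff h𝒜 hanti
      (isRealizableLoad_herdLoad hP (by omega : i + min k (m + 1) ≤ n))
    rw [Fin.eq_const_iff_head_tail, IsKLA, loaded_truncate]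
    simp only [hSPO, hPi, exists_eq_left, exists_prop, (by omega : 0 < min k (m + 1)), true_and,
      eq_comm (a := P)]
    refine and_congr_right fun h0 => ?_
    rw [h0, loaded_subgame, addAction_herdLoad]
    exact hgen.isKLA_loaded_herdLoad_iff h𝒜 hanti hk (by omega) _

theorem Generic.isKLO_iff (hgen : Generic (⟨fun _ => 𝒜, d⟩ : CGame R n))
    (h𝒜 : 𝒜.Nonempty) (hanti : ∀ r, Antitone (d r)) {k : ℕ} (hk : 1 ≤ k)
    (A : Fin n → Finset R) :
    IsKLO k (⟨fun _ => 𝒜, d⟩ : CGame R n) A ↔ A = fun _ => herdAction 𝒜 d h𝒜 0 (min k n) := by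
  have hKLA := hgen.isKLA_loaded_herdLoad_iff h𝒜 hanti hk (zero_add n)
  rw [herdLoad_zero, loaded_zero] at hKLA
  refine ⟨fun ⟨σ, hσ⟩ => ?_, fun hA => ⟨Equiv.refl _, (hKLA _).2 (by rw [hA]; rfl)⟩⟩
  funext x
  simpa using congrFun ((hKLA _).1 hσ) (σ.symm x)

theorem Generic.kLPoA_eq (hgen : Generic (⟨fun _ => 𝒜, d⟩ : CGame R n))
    (h𝒜 : 𝒜.Nonempty) (hanti : ∀ r, Antitone (d r)) {k : ℕ} (hk : 1 ≤ k) :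
    kLPoA (⟨fun _ => 𝒜, d⟩ : CGame R n) k =
      n * (∑ r ∈ herdAction 𝒜 d h𝒜 0 (min k n), d r n) /
        optSC (⟨fun _ => 𝒜, d⟩ : CGame R n) := by
  simp only [kLPoA, hgen.isKLO_iff h𝒜 hanti hk, exists_eq_left, SC_const,
    Set.ofPred_eq_eq_singleton, csSup_singleton]

end Symmetric

theorem sum_herdAction_le_sum_herdAction_pred {R : Type} {𝒜 : Finset (Finset R)}
    {d : R → ℕ → ℝ} (h𝒜 : 𝒜.Nonempty) (a b : R → ℝ)
    (hform : ∀ r (x : ℕ), 1 ≤ x → d r x = a r / (x : ℝ) + b r) {k n : ℕ} (hk2 : 2 ≤ k)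
    (hkn : k ≤ n) :
    ∑ r ∈ herdAction 𝒜 d h𝒜 0 k, d r n ≤ ∑ r ∈ herdAction 𝒜 d h𝒜 0 (k - 1), d r n := by
  set P := herdAction 𝒜 d h𝒜 0 k
  set Q := herdAction 𝒜 d h𝒜 0 (k - 1)
  have hsum : ∀ X : Finset R, ∀ x : ℕ, 1 ≤ x →
      ∑ r ∈ X, d r x = (∑ r ∈ X, a r) / x + ∑ r ∈ X, b r := fun X x hx => by
    rw [sum_div, ← sum_add_distrib]
    exact sum_congr rfl fun r _ => hform r x hx
  have hk : ∑ r ∈ P, d r k ≤ ∑ r ∈ Q, d r k := by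
    simpa only [sharedCost_zero] using
      sharedCost_herdAction_le (c := 0) (t := k) h𝒜 (herdAction_mem (d := d) (c := 0) h𝒜)
  have hk' : ∑ r ∈ Q, d r (k - 1) ≤ ∑ r ∈ P, d r (k - 1) := by
    simpa only [sharedCost_zero] using
      sharedCost_herdAction_le (c := 0) (t := k - 1) h𝒜 (herdAction_mem (d := d) (c := 0) h𝒜)
  rw [hsum _ _ (by omega), hsum _ _ (by omega)] at hk hk' ⊢
  have key := div_add_nonpos_of_sign_change (α := ∑ r ∈ P, a r - ∑ r ∈ Q, a r)
    (β := ∑ r ∈ P, b r - ∑ r ∈ Q, b r) (s := ((k - 1 : ℕ) : ℝ)) (t := k) (u := n)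
    (Nat.cast_pos.2 (by omega)) (Nat.cast_lt.2 (by omega)) (Nat.cast_le.2 hkn)
    (by rw [sub_div]; linarith) (by rw [sub_div]; linarith)
  rw [sub_div] at key
  linarith

end CGame

theorem kLPoA_nonincreasing_general {R : Type} [DecidableEq R] [Fintype R] {n : ℕ}
    (𝒜 : Finset (Finset R)) (h𝒜 : 𝒜.Nonempty) (d : R → ℕ → ℝ)
    (hanti : ∀ r, Antitone (d r))
    (hnonneg : ∀ r m, 0 ≤ d r m)
    (a b : R → ℝ)
    (hform : ∀ r (x : ℕ), 1 ≤ x → d r x = a r / (x : ℝ) + b r)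
    (hgen : CGame.Generic (⟨fun _ => 𝒜, d⟩ : CGame R n))
    (k : ℕ) (hk2 : 2 ≤ k) (hkn : k ≤ n) :
    CGame.kLPoA (⟨fun _ => 𝒜, d⟩ : CGame R n) k ≤
      CGame.kLPoA (⟨fun _ => 𝒜, d⟩ : CGame R n) (k - 1) := by
  rw [hgen.kLPoA_eq h𝒜 hanti (by omega), hgen.kLPoA_eq h𝒜 hanti (by omega),
    min_eq_left hkn, min_eq_left (by omega : k - 1 ≤ n)]
  refine div_le_div_of_nonneg_right ?_ (CGame.optSC_nonneg _ hnonneg)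
  exact mul_le_mul_of_nonneg_left
    (CGame.sum_herdAction_le_sum_herdAction_pred h𝒜 a b hform hk2 hkn) n.cast_nonneg

/-- For a generic symmetric cost-sharing game whose delay functions
have the form `d_r(x) = a_r/x + b_r` (with `a_r, b_r ≥ 0`), the `k`-Lookahead Price of
Anarchy is nonincreasing in `k`. -/
theorem kLPoA_nonincreasing {R : Type} [DecidableEq R] [Fintype R] {n : ℕ}
    (𝒜 : Finset (Finset R)) (h𝒜 : 𝒜.Nonempty) (d : R → ℕ → ℝ)
    (hanti : ∀ r, Antitone (d r))
    (hnonneg : ∀ r m, 0 ≤ d r m)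
    (a b : R → ℝ) (ha : ∀ r, 0 ≤ a r) (hb : ∀ r, 0 ≤ b r)
    (hform : ∀ r (x : ℕ), 1 ≤ x → d r x = a r / (x : ℝ) + b r)
    (hgen : CGame.Generic (⟨fun _ => 𝒜, d⟩ : CGame R n))
    (k : ℕ) (hk2 : 2 ≤ k) (hkn : k ≤ n) :
    CGame.kLPoA (⟨fun _ => 𝒜, d⟩ : CGame R n) k ≤
      CGame.kLPoA (⟨fun _ => 𝒜, d⟩ : CGame R n) (k - 1) :=
  kLPoA_nonincreasing_general 𝒜 h𝒜 d hanti hnonneg a b hform hgen k hk2 hkn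
end

section
/- Let G be a generic singleton cost-sharing game. Then every subgame-perfect outcome of G (with respect to any order of the players) is a Nash equilibrium of G. -/
/-!
Consider the greedy procedure: among the resources that some undecided player can use, pick
one, `r`, of least delay when all undecided players able to use `r` join the players already on
it; put those players on `r` and repeat. Its outcomes are Nash equilibria: a player put on `r`
who moves to `b` finds on `b` at most the load `b` was evaluated with, and `r` was no worse.

Conversely, by induction on the number of players, every subgame-perfect outcome arises this
way. By genericity, tied greedy choices have disjoint sets of capable players, so they can be
taken in any order. Pinning the leader to an action can only raise greedy delays, and leaves
that of a resource unchanged if the leader cannot use it or sits on it. So a first greedy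
choice `ρ` the leader cannot use is taken first in every subgame, and we recurse; if he can use
`ρ`, choosing it costs him exactly its greedy delay, which is at most his cost in the
subgame-perfect outcome, so by genericity he chooses it.
-/

namespace CGame

open Finset Function

variable {R : Type} [DecidableEq R] [Fintype R] {n : ℕ}

def IsSingleton (H : CGame R n) : Prop :=
  ∀ i, ∀ B ∈ H.actions i, B.card = 1

def IsCostSharing (H : CGame R n) : Prop :=
  ∀ r, Antitone (H.delay r)

def capable (H : CGame R n) (S : Finset (Fin n)) (r : R) : Finset (Fin n) :=
  S.filter fun i => {r} ∈ H.actions i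

def load (H : CGame R n) (X : Fin n → Finset R) (S : Finset (Fin n)) (r : R) : ℕ :=
  (univ.filter fun i => if i ∈ S then {r} ∈ H.actions i else r ∈ X i).card

def greedyDelay (H : CGame R n) (X : Fin n → Finset R) (S : Finset (Fin n)) (r : R) : ℝ :=
  H.delay r (H.load X S r)

def IsGreedyChoice (H : CGame R n) (X : Fin n → Finset R) (S : Finset (Fin n)) (r : R) : Prop :=
  (H.capable S r).Nonempty ∧
    ∀ r', (H.capable S r').Nonempty → H.greedyDelay X S r ≤ H.greedyDelay X S r'

inductive IsGreedyFrom (H : CGame R n) (A : Fin n → Finset R) : Finset (Fin n) → Prop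
  | empty : IsGreedyFrom H A ∅
  | step (S : Finset (Fin n)) (r : R) (hr : H.IsGreedyChoice A S r)
      (hA : ∀ i ∈ H.capable S r, A i = {r})
      (hrest : IsGreedyFrom H A (S \ H.capable S r)) : IsGreedyFrom H A S

section Load

variable {H : CGame R n} {X : Fin n → Finset R} {S U : Finset (Fin n)} {i : Fin n} {r : R}

lemma capable_subset : H.capable S r ⊆ S := filter_subset _ _

lemma mem_capable : i ∈ H.capable S r ↔ i ∈ S ∧ {r} ∈ H.actions i := mem_filter

lemma capable_mono (h : U ⊆ S) : H.capable U r ⊆ H.capable S r := filter_subset_filter _ h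

lemma capable_sdiff : H.capable (S \ U) r = H.capable S r \ U := by
  ext i
  simp only [mem_capable, mem_sdiff]
  tauto

lemma singleton_mem_actions (hH : H.IsSingleton) (hX : H.IsOutcome X) (h : r ∈ X i) :
    {r} ∈ H.actions i := by
  obtain ⟨b, hb⟩ := card_eq_one.mp (hH i (X i) (hX i))
  rw [hb, mem_singleton] at h
  exact h ▸ hb ▸ hX i

lemma cost_eq_of_eq_singleton (h : X i = {r}) : H.cost X i = H.delay r (H.congestion X r) := by
  rw [cost, h, sum_singleton]

lemma congestion_le_load (hH : H.IsSingleton) (hX : H.IsOutcome X) :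
    H.congestion X r ≤ H.load X S r := by
  refine card_le_card fun i hi => ?_
  simp only [mem_filter, mem_univ, true_and] at hi ⊢
  split
  · exact singleton_mem_actions hH hX hi
  · exact hi

lemma congestion_eq_load (hH : H.IsSingleton) (hX : H.IsOutcome X)
    (h : ∀ i ∈ H.capable S r, X i = {r}) : H.congestion X r = H.load X S r := by
  refine congrArg card (filter_congr fun i _ => ?_)
  split_ifs with hi
  · exact ⟨singleton_mem_actions hH hX, fun hr => by simp [h i (mem_capable.mpr ⟨hi, hr⟩)]⟩
  · rfl

lemma load_sdiff_eq (h : ∀ i ∈ U, r ∈ X i ↔ {r} ∈ H.actions i) :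
    H.load X (S \ U) r = H.load X S r := by
  refine congrArg card (filter_congr fun i _ => ?_)
  by_cases hiU : i ∈ U
  · by_cases hiS : i ∈ S <;> simp [hiS, hiU, h i hiU]
  · by_cases hiS : i ∈ S <;> simp [hiS, hiU]

lemma load_sdiff_le (hH : H.IsSingleton) (hX : H.IsOutcome X) :
    H.load X (S \ U) r ≤ H.load X S r := by
  refine card_le_card fun i hi => ?_
  simp only [mem_filter, mem_univ, true_and, mem_sdiff] at hi ⊢
  by_cases hiS : i ∈ S
  · by_cases hiU : i ∈ U
    · simp only [hiS, hiU, not_true, and_false, if_false, if_true] at hi ⊢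
      exact singleton_mem_actions hH hX hi
    · simpa [hiS, hiU] using hi
  · simpa [hiS] using hi

lemma greedyDelay_le_sdiff (hH : H.IsSingleton) (hc : H.IsCostSharing) (hX : H.IsOutcome X) :
    H.greedyDelay X S r ≤ H.greedyDelay X (S \ U) r :=
  hc r (load_sdiff_le hH hX)

lemma congestion_update_singleton (hr : r ∉ X i) :
    H.congestion (update X i {r}) r = H.congestion X r + 1 := by
  have : univ.filter (fun j => r ∈ update X i {r} j) =
      insert i (univ.filter fun j => r ∈ X j) := by
    ext j
    by_cases hj : j = i
    · subst hj; simp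
    · simp [hj]
  rw [congestion, congestion, this, card_insert_of_notMem (by simp [hr])]

lemma congestion_add_one_le_load (hH : H.IsSingleton) (hX : H.IsOutcome X)
    (hi : i ∈ H.capable S r) (hr : r ∉ X i) : H.congestion X r + 1 ≤ H.load X S r := by
  rw [congestion,
    ← card_insert_of_notMem (a := i) (s := univ.filter fun j => r ∈ X j) (by simp [hr])]
  refine card_le_card fun j hj => ?_
  rw [mem_capable] at hi
  rcases mem_insert.mp hj with rfl | hj
  · simp [hi.1, hi.2]
  · simp only [mem_filter, mem_univ, true_and] at hj ⊢
    split
    · exact singleton_mem_actions hH hX hj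
    · exact hj

end Load

lemma IsGreedyFrom.cost_le_update {H : CGame R n} {A : Fin n → Finset R} {S : Finset (Fin n)}
    (hH : H.IsSingleton) (hc : H.IsCostSharing) (hA : H.IsOutcome A) (hg : H.IsGreedyFrom A S) :
    ∀ i ∈ S, ∀ B ∈ H.actions i, H.cost A i ≤ H.cost (update A i B) i := by
  induction hg with
  | empty => simp
  | step S r hr hAr _ ih =>
    intro i hi B hB
    by_cases hir : i ∈ H.capable S r
    · obtain ⟨b, rfl⟩ := card_eq_one.mp (hH i B hB)
      have hAi : A i = {r} := hAr i hir
      by_cases hbr : b = r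
      · rw [hbr, ← hAi, update_eq_self]
      have hb : b ∉ A i := by simpa [hAi] using hbr
      have hib : i ∈ H.capable S b := mem_capable.mpr ⟨hi, hB⟩
      calc H.cost A i = H.greedyDelay A S r := by
            rw [cost_eq_of_eq_singleton hAi, greedyDelay, congestion_eq_load hH hA hAr]
        _ ≤ H.greedyDelay A S b := hr.2 b ⟨i, hib⟩
        _ ≤ H.delay b (H.congestion A b + 1) := hc b (congestion_add_one_le_load hH hA hib hb)
        _ = H.cost (update A i {b}) i := by
            rw [cost_eq_of_eq_singleton (update_self i {b} A), congestion_update_singleton hb]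
    · exact ih i (mem_sdiff.mpr ⟨hi, hir⟩) B hB

section Greedy

variable {H : CGame R n} {X A : Fin n → Finset R} {S U : Finset (Fin n)} {j p : Fin n}
  {a b r ρ : R}

lemma capable_sdiff_of_disjoint (h : Disjoint (H.capable S r) U) :
    H.capable (S \ U) r = H.capable S r := by
  rw [capable_sdiff, sdiff_eq_self_of_disjoint h]

lemma capable_insert_of_mem (h : {r} ∈ H.actions p) :
    H.capable (insert p S) r = insert p (H.capable S r) := by
  rw [capable, capable, filter_insert, if_pos h]

lemma capable_insert_of_notMem (h : {r} ∉ H.actions p) :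
    H.capable (insert p S) r = H.capable S r := by
  rw [capable, capable, filter_insert, if_neg h]

lemma greedyDelay_le_cost (hH : H.IsSingleton) (hc : H.IsCostSharing) (hX : H.IsOutcome X)
    (h : X j = {r}) : H.greedyDelay X S r ≤ H.cost X j := by
  rw [cost_eq_of_eq_singleton h]
  exact hc r (congestion_le_load hH hX)

lemma exists_isGreedyChoice (h : (H.capable S r).Nonempty) : ∃ ρ, H.IsGreedyChoice X S ρ := by
  obtain ⟨ρ, hρ, hmin⟩ := exists_min_image (univ.filter fun r => (H.capable S r).Nonempty)
    (H.greedyDelay X S) ⟨r, by simpa using h⟩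
  exact ⟨ρ, by simpa using hρ, fun r' hr' => hmin r' (by simpa using hr')⟩

lemma IsGreedyChoice.sdiff (hH : H.IsSingleton) (hc : H.IsCostSharing) (hX : H.IsOutcome X)
    (h : H.IsGreedyChoice X S r) (hne : (H.capable (S \ U) r).Nonempty)
    (heq : H.greedyDelay X (S \ U) r = H.greedyDelay X S r) :
    H.IsGreedyChoice X (S \ U) r :=
  ⟨hne, fun r' hr' => heq ▸ (h.2 r' (hr'.mono (capable_mono sdiff_subset))).trans
    (greedyDelay_le_sdiff hH hc hX)⟩

lemma greedyDelay_sdiff_capable (hab : a ≠ b) (hdisj : Disjoint (H.capable S a) (H.capable S b))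
    (hb : ∀ i ∈ H.capable S b, X i = {b}) :
    H.greedyDelay X (S \ H.capable S b) a = H.greedyDelay X S a := by
  refine congrArg (H.delay a) (load_sdiff_eq fun i hi => ?_)
  simp only [hb i hi, mem_singleton, hab, false_iff]
  exact fun ha => disjoint_left.mp hdisj (mem_capable.mpr ⟨capable_subset hi, ha⟩) hi

lemma costOn_univ (X : Fin n → Finset R) (j : Fin n) : H.costOn univ X j = H.cost X j := rfl

lemma Generic.cost_ne (hgen : H.Generic) (hX : H.IsOutcome X) (hA : H.IsOutcome A)
    (h : X j ≠ A j) : H.cost X j ≠ H.cost A j :=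
  hgen univ X A (fun i _ => hX i) (fun i _ => hA i) j (mem_univ j) h

lemma costOn_eq_greedyDelay {s : Finset (Fin n)} {Y : Fin n → Finset R}
    (hs : ∀ i ∉ S, i ∈ s) (hcap : H.capable S r ⊆ s) (hYX : ∀ i ∉ S, Y i = X i)
    (hYS : ∀ i ∈ s, i ∈ S → (r ∈ Y i ↔ {r} ∈ H.actions i)) (hj : Y j = {r}) :
    H.costOn s Y j = H.greedyDelay X S r := by
  rw [costOn, hj, sum_singleton, greedyDelay, load]
  congr 2
  ext i
  simp only [mem_filter, mem_univ, true_and]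
  by_cases hi : i ∈ S
  · simp only [hi, if_true]
    refine ⟨fun h => (hYS i h.1 hi).mp h.2, fun h => ?_⟩
    have his := hcap (mem_capable.mpr ⟨hi, h⟩)
    exact ⟨his, (hYS i his hi).mpr h⟩
  · simp [hi, hs i hi, hYX i hi]

lemma greedyDelay_ne_of_mem_capable (hgen : H.Generic) (hX : H.IsOutcome X) (hρr : ρ ≠ r)
    (hjρ : j ∈ H.capable S ρ) (hjr : j ∈ H.capable S r) :
    H.greedyDelay X S ρ ≠ H.greedyDelay X S r := by
  -- Compare `j` on `ρ` and on `r` among the players outside `S` and those of `S` able to use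
  -- `ρ` or `r`, the latter put on `ρ` or `r` (preferring `j`'s resource): `j` then pays the
  -- greedy delays.
  set s := (univ \ S) ∪ (H.capable S ρ ∪ H.capable S r)
  let Y (a b : R) : Fin n → Finset R := fun i =>
    if i ∈ H.capable S a then {a} else if i ∈ H.capable S b then {b} else X i
  have hY : ∀ a b, ∀ i, Y a b i ∈ H.actions i := fun a b i => by
    simp only [Y]
    split_ifs with ha hb
    exacts [(mem_capable.mp ha).2, (mem_capable.mp hb).2, hX i]
  have hcost : ∀ a b, a ≠ b → j ∈ H.capable S a →
      s = (univ \ S) ∪ (H.capable S a ∪ H.capable S b) →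
      H.costOn s (Y a b) j = H.greedyDelay X S a := by
    intro a b hab hja hs
    refine costOn_eq_greedyDelay (fun i hi => by simp [hs, hi])
      (hs ▸ subset_union_left.trans subset_union_right) (fun i hi => ?_) (fun i his hi => ?_)
      (by simp [Y, hja])
    · simp [Y, hi, mem_capable]
    · rw [hs] at his
      by_cases hia : i ∈ H.capable S a
      · simp [Y, hia, (mem_capable.mp hia).2]
      · have hib : i ∈ H.capable S b := by simpa [hi, hia] using his
        simpa [Y, hia, hib, hab] using fun h => hia (mem_capable.mpr ⟨hi, h⟩)
  intro heq
  refine hgen s (Y ρ r) (Y r ρ) (fun i _ => hY ρ r i) (fun i _ => hY r ρ i) j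
    (by simp [s, hjρ]) (by simp [Y, hjρ, hjr, hρr]) ?_
  rw [hcost ρ r hρr hjρ rfl, hcost r ρ hρr.symm hjr (by rw [union_comm (H.capable S r)]), heq]

end Greedy

section Exchange

variable {H : CGame R n} {X : Fin n → Finset R} {S : Finset (Fin n)} {ρ : R}

/-- Ties between greedy choices are only possible for resources with disjoint sets of capable
players, so any greedy choice may be taken first. -/
lemma IsGreedyFrom.exchange (hH : H.IsSingleton) (hc : H.IsCostSharing) (hgen : H.Generic)
    (hX : H.IsOutcome X) (hg : H.IsGreedyFrom X S) (hρ : H.IsGreedyChoice X S ρ) :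
    (∀ i ∈ H.capable S ρ, X i = {ρ}) ∧ H.IsGreedyFrom X (S \ H.capable S ρ) := by
  induction hg with
  | empty => simp [IsGreedyChoice, capable] at hρ
  | step S r hr hXr hrest ih =>
    by_cases hrρ : r = ρ
    · subst hrρ
      exact ⟨hXr, hrest⟩
    have hdisj : Disjoint (H.capable S ρ) (H.capable S r) := disjoint_left.mpr fun j hjρ hjr =>
      greedyDelay_ne_of_mem_capable hgen hX (Ne.symm hrρ) hjρ hjr
        (le_antisymm (hρ.2 r hr.1) (hr.2 ρ hρ.1))
    have hcapρ := capable_sdiff_of_disjoint hdisj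
    have hcapr := capable_sdiff_of_disjoint hdisj.symm
    obtain ⟨hXρ, hrestρ⟩ := ih (hρ.sdiff hH hc hX (hcapρ ▸ hρ.1)
      (greedyDelay_sdiff_capable (Ne.symm hrρ) hdisj hXr))
    rw [hcapρ] at hXρ hrestρ
    refine ⟨hXρ, .step _ r (hr.sdiff hH hc hX (hcapr ▸ hr.1)
      (greedyDelay_sdiff_capable hrρ hdisj.symm hXρ)) (hcapr ▸ hXr) ?_⟩
    rwa [hcapr, sdiff_sdiff_comm]

end Exchange

section Pinning

variable {H : CGame R n} {X A : Fin n → Finset R} {S : Finset (Fin n)} {p : Fin n} {b r ρ : R}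

/-! Below, `X` is `A` with the leader `p ∉ S` pinned to `{b}`; the two may differ on `S`. -/

lemma load_insert_of_pin (hpS : p ∉ S) (hb : {b} ∈ H.actions p) (hXp : X p = {b})
    (hXA : ∀ i ∉ insert p S, X i = A i) (hr : {r} ∉ H.actions p ∨ r = b) :
    H.load X S r = H.load A (insert p S) r := by
  refine congrArg card (filter_congr fun i _ => ?_)
  by_cases hip : i = p
  · subst hip
    rcases hr with hr | rfl
    · simpa [hpS, hXp, hr] using fun h : r = b => hr (h ▸ hb)
    · simp [hpS, hXp, hb]
  · by_cases hiS : i ∈ S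
    · simp [hiS, hip]
    · simp [hiS, hip, hXA i (by simp [hiS, hip])]

lemma load_insert_of_pin_of_ne (hpS : p ∉ S) (hXp : X p = {b})
    (hXA : ∀ i ∉ insert p S, X i = A i) (hr : {r} ∈ H.actions p) (hrb : r ≠ b) :
    H.load X S r + 1 = H.load A (insert p S) r := by
  have : univ.filter (fun i => if i ∈ insert p S then {r} ∈ H.actions i else r ∈ A i) =
      insert p (univ.filter fun i => if i ∈ S then {r} ∈ H.actions i else r ∈ X i) := by
    ext i
    by_cases hip : i = p
    · subst hip
      simp [hr]
    · by_cases hiS : i ∈ S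
      · simp [hiS, hip]
      · simp [hiS, hip, hXA i (by simp [hiS, hip])]
  rw [load, load, this, card_insert_of_notMem (by simp [hpS, hXp, hrb])]

lemma greedyDelay_insert_le_of_pin (hc : H.IsCostSharing) (hpS : p ∉ S)
    (hb : {b} ∈ H.actions p) (hXp : X p = {b}) (hXA : ∀ i ∉ insert p S, X i = A i) (r : R) :
    H.greedyDelay A (insert p S) r ≤ H.greedyDelay X S r := by
  by_cases hrb : {r} ∈ H.actions p ∧ r ≠ b
  · rw [greedyDelay, greedyDelay, ← load_insert_of_pin_of_ne hpS hXp hXA hrb.1 hrb.2]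
    exact hc r (Nat.le_succ _)
  · rw [greedyDelay, greedyDelay, load_insert_of_pin hpS hb hXp hXA (by tauto)]

lemma IsGreedyFrom.exchange_of_pin (hH : H.IsSingleton) (hc : H.IsCostSharing)
    (hgen : H.Generic) (hX : H.IsOutcome X) (hg : H.IsGreedyFrom X S) (hpS : p ∉ S)
    (hb : {b} ∈ H.actions p) (hXp : X p = {b}) (hXA : ∀ i ∉ insert p S, X i = A i)
    (hρ : H.IsGreedyChoice A (insert p S) ρ) (hρb : {ρ} ∉ H.actions p ∨ ρ = b) :
    (∀ i ∈ H.capable S ρ, X i = {ρ}) ∧ H.IsGreedyFrom X (S \ H.capable S ρ) := by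
  rcases (H.capable S ρ).eq_empty_or_nonempty with hempty | hne
  · simpa [hempty] using hg
  refine hg.exchange hH hc hgen hX ⟨hne, fun r' hr' => ?_⟩
  calc H.greedyDelay X S ρ = H.greedyDelay A (insert p S) ρ := by
        rw [greedyDelay, greedyDelay, load_insert_of_pin hpS hb hXp hXA hρb]
    _ ≤ H.greedyDelay A (insert p S) r' := hρ.2 r' (hr'.mono (capable_mono (subset_insert p S)))
    _ ≤ H.greedyDelay X S r' := greedyDelay_insert_le_of_pin hc hpS hb hXp hXA r'

lemma cost_eq_greedyDelay_of_pin (hH : H.IsSingleton) (hX : H.IsOutcome X) (hpS : p ∉ S)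
    (hb : {b} ∈ H.actions p) (hXp : X p = {b}) (hXA : ∀ i ∉ insert p S, X i = A i)
    (hXb : ∀ i ∈ H.capable S b, X i = {b}) :
    H.cost X p = H.greedyDelay A (insert p S) b := by
  rw [cost_eq_of_eq_singleton hXp, congestion_eq_load hH hX hXb,
    load_insert_of_pin hpS hb hXp hXA (Or.inr rfl), greedyDelay]

end Pinning

section Leader

variable {H : CGame R n} {A : Fin n → Finset R} {S : Finset (Fin n)} {p : Fin n}

/-- `f B` is the play of the others after the leader `p` chooses `B`; `A = f (A p)` is best
for `p`. -/
lemma isGreedyFrom_insert_of_leader (hH : H.IsSingleton) (hc : H.IsCostSharing)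
    (hgen : H.Generic) {f : Finset R → Fin n → Finset R} (hAp : A p ∈ H.actions p)
    (hfA : f (A p) = A) (hfp : ∀ B ∈ H.actions p, f B p = B)
    (hf : ∀ B ∈ H.actions p, H.IsOutcome (f B))
    (hcost : ∀ B ∈ H.actions p, H.cost A p ≤ H.cost (f B) p) (hpS : p ∉ S)
    (hfS : ∀ B ∈ H.actions p, ∀ i ∉ insert p S, f B i = A i)
    (hg : ∀ B ∈ H.actions p, H.IsGreedyFrom (f B) S) :
    H.IsGreedyFrom A (insert p S) := by
  induction S using Finset.strongInduction with
  | H S ih =>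
  have hA : H.IsOutcome A := hfA ▸ hf _ hAp
  obtain ⟨b, hb⟩ := card_eq_one.mp (hH p _ hAp)
  have hpb : p ∈ H.capable (insert p S) b := mem_capable.mpr ⟨mem_insert_self p S, hb ▸ hAp⟩
  obtain ⟨ρ, hρ⟩ := exists_isGreedyChoice (X := A) ⟨p, hpb⟩
  have hexch : ∀ B ∈ H.actions p, ({ρ} ∉ H.actions p ∨ B = {ρ}) →
      (∀ i ∈ H.capable S ρ, f B i = {ρ}) ∧ H.IsGreedyFrom (f B) (S \ H.capable S ρ) := by
    intro B hB hρB
    obtain ⟨c, rfl⟩ := card_eq_one.mp (hH p B hB)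
    exact (hg _ hB).exchange_of_pin hH hc hgen (hf _ hB) hpS hB (hfp _ hB) (hfS _ hB) hρ
      (hρB.imp_right fun h => (singleton_inj.mp h).symm)
  by_cases hρp : {ρ} ∈ H.actions p
  · have hAρ : A p = {ρ} := by
      by_contra hne
      refine hgen.cost_ne hA (hf _ hρp) (by rwa [hfp _ hρp]) (le_antisymm (hcost _ hρp) ?_)
      calc H.cost (f {ρ}) p = H.greedyDelay A (insert p S) ρ :=
            cost_eq_greedyDelay_of_pin hH (hf _ hρp) hpS hρp (hfp _ hρp) (hfS _ hρp)
              (hexch _ hρp (Or.inr rfl)).1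
        _ ≤ H.greedyDelay A (insert p S) b := hρ.2 b ⟨p, hpb⟩
        _ ≤ H.cost A p := greedyDelay_le_cost hH hc hA hb
    obtain ⟨hAS, hrest⟩ := hfA ▸ hexch _ hAp (Or.inr hAρ)
    refine .step _ ρ hρ ?_ ?_
    · rw [capable_insert_of_mem hρp]
      exact (forall_mem_insert _ _ _).mpr ⟨hAρ, hAS⟩
    · rwa [capable_insert_of_mem hρp, insert_sdiff_insert, sdiff_insert_of_notMem hpS]
  · have hcap := capable_insert_of_notMem (S := S) hρp
    have hfρ := fun B hB => hexch B hB (Or.inl hρp)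
    have hAS : ∀ i ∈ H.capable S ρ, A i = {ρ} := hfA ▸ (hfρ _ hAp).1
    refine .step _ ρ hρ (hcap ▸ hAS) ?_
    rw [hcap, insert_sdiff_of_notMem _ fun h => hpS (capable_subset h)]
    refine ih _ (sdiff_ssubset capable_subset (hcap ▸ hρ.1)) (fun h => hpS (mem_sdiff.mp h).1)
      (fun B hB i hi => ?_) fun B hB => (hfρ B hB).2
    by_cases hiρ : i ∈ H.capable S ρ
    · rw [(hfρ B hB).1 i hiρ, hAS i hiρ]
    · exact hfS B hB i (by simp_all)

end Leader

section Subgame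

variable {H : CGame R (n + 1)} {a : Finset R} {T : Fin n → Finset R} {S : Finset (Fin n)}
  {r : R}

lemma IsSingleton.subgame (hH : H.IsSingleton) : (H.subgame a).IsSingleton :=
  fun i => hH i.succ

lemma IsCostSharing.subgame (hc : H.IsCostSharing) : (H.subgame a).IsCostSharing :=
  fun r _ _ h => hc r (Nat.add_le_add_right h _)

lemma costOn_subgame (s : Finset (Fin n)) (j : Fin n) :
    (H.subgame a).costOn s T j =
      H.costOn (insert 0 (s.map (Fin.succEmb n))) (Fin.cons a T) j.succ := by
  refine sum_congr rfl fun r _ => congrArg (H.delay r) ?_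
  rw [filter_insert, filter_map]
  by_cases hra : r ∈ a <;> simp [hra, Fin.succ_ne_zero, comp_def]

lemma Generic.subgame (hgen : H.Generic) (ha : a ∈ H.actions 0) : (H.subgame a).Generic := by
  intro s T U hT hU j hj hne
  have hcons : ∀ X : Fin n → Finset R, (∀ i ∈ s, X i ∈ (H.subgame a).actions i) →
      ∀ i ∈ insert 0 (s.map (Fin.succEmb n)),
        (Fin.cons a X : Fin (n + 1) → Finset R) i ∈ H.actions i := by
    intro X hX i hi
    rcases mem_insert.mp hi with rfl | hi
    · exact ha
    · obtain ⟨k, hk, rfl⟩ := mem_map.mp hi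
      exact hX k hk
  rw [costOn_subgame, costOn_subgame]
  exact hgen _ _ _ (hcons T hT) (hcons U hU) j.succ (mem_insert_of_mem (mem_map_of_mem _ hj)) hne

lemma capable_map_succ :
    H.capable (S.map (Fin.succEmb n)) r = ((H.subgame a).capable S r).map (Fin.succEmb n) := by
  rw [capable, capable, filter_map]
  rfl

lemma load_cons :
    H.load (Fin.cons a T) (S.map (Fin.succEmb n)) r =
      (H.subgame a).load T S r + if r ∈ a then 1 else 0 := by
  rw [load, load, Fin.card_filter_univ_succ', add_comm]
  simp [Fin.succ_ne_zero]
  rfl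

lemma greedyDelay_cons :
    H.greedyDelay (Fin.cons a T) (S.map (Fin.succEmb n)) r = (H.subgame a).greedyDelay T S r := by
  rw [greedyDelay, greedyDelay, load_cons, subgame]

lemma IsGreedyChoice.cons (h : (H.subgame a).IsGreedyChoice T S r) :
    H.IsGreedyChoice (Fin.cons a T) (S.map (Fin.succEmb n)) r := by
  refine ⟨capable_map_succ (a := a) ▸ h.1.map, fun r' hr' => ?_⟩
  rw [capable_map_succ (a := a), map_nonempty] at hr'
  rw [greedyDelay_cons, greedyDelay_cons]
  exact h.2 r' hr'

lemma IsGreedyFrom.cons (h : (H.subgame a).IsGreedyFrom T S) :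
    H.IsGreedyFrom (Fin.cons a T) (S.map (Fin.succEmb n)) := by
  induction h with
  | empty => exact .empty
  | step S r hr hT _ ih =>
    refine .step _ r hr.cons ?_ ?_
    · rw [capable_map_succ (a := a)]
      simpa using hT
    · rwa [capable_map_succ (a := a), ← Finset.map_sdiff]

end Subgame

lemma IsSPO.isOutcome : ∀ {n : ℕ} {H : CGame R n} {B : Fin n → Finset R},
    H.IsSPO B → H.IsOutcome B
  | 0, _, _, _ => fun i => i.elim0
  | _ + 1, _, _, ⟨h0, _, hf, hfB, _⟩ => by
    have h := (hf _ h0).isOutcome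
    rw [hfB] at h
    exact Fin.cases h0 h

lemma univ_eq_insert_zero_map_succ :
    (univ : Finset (Fin (n + 1))) = insert 0 (univ.map (Fin.succEmb n)) := by
  ext i
  cases i using Fin.cases <;> simp

lemma IsSPO.isGreedyFrom_univ : ∀ {n : ℕ} {H : CGame R n} {B : Fin n → Finset R},
    H.IsSPO B → H.IsSingleton → H.IsCostSharing → H.Generic → H.IsGreedyFrom B univ
  | 0, _, _, _, _, _, _ => by simpa using IsGreedyFrom.empty
  | _ + 1, H, B, ⟨h0, f, hf, hfB, hmin⟩, hH, hc, hgen => by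
    have hcons : Fin.cons (B 0) (f (B 0)) = B := hfB ▸ Fin.cons_self_tail B
    rw [univ_eq_insert_zero_map_succ]
    refine isGreedyFrom_insert_of_leader (f := fun a => Fin.cons a (f a)) hH hc hgen h0 hcons
      (fun _ _ => rfl) (fun a ha => Fin.cases ha (hf a ha).isOutcome)
      (fun a ha => hcons ▸ hmin a ha) (by simp) (fun _ _ i hi => ?_) fun a ha =>
        ((hf a ha).isGreedyFrom_univ hH.subgame hc.subgame (hgen.subgame ha)).cons
    exact absurd (univ_eq_insert_zero_map_succ ▸ mem_univ i) hi

lemma IsSPO.isNash {H : CGame R n} {B : Fin n → Finset R} (hB : H.IsSPO B)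
    (hH : H.IsSingleton) (hc : H.IsCostSharing) (hgen : H.Generic) : H.IsNash B :=
  ⟨hB.isOutcome, fun i => (hB.isGreedyFrom_univ hH hc hgen).cost_le_update hH hc hB.isOutcome i
    (mem_univ i)⟩

section Reorder

variable {G : CGame R n} (σ : Equiv.Perm (Fin n))

lemma costOn_reorder (s : Finset (Fin n)) (X : Fin n → Finset R) (j : Fin n) :
    (G.reorder σ).costOn s X j = G.costOn (s.map σ.toEmbedding) (X ∘ σ.symm) (σ j) := by
  simp only [costOn, comp_apply, Equiv.coe_toEmbedding, Equiv.symm_apply_apply, filter_map,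
    card_map]
  rfl

lemma cost_reorder (X : Fin n → Finset R) (i : Fin n) :
    (G.reorder σ).cost (X ∘ σ) i = G.cost X (σ i) := by
  rw [← costOn_univ, costOn_reorder, map_univ_equiv, comp_assoc, Equiv.self_comp_symm, comp_id,
    costOn_univ]

lemma Generic.reorder (hgen : G.Generic) : (G.reorder σ).Generic := by
  intro s X Y hX hY j hj hne
  have hmap : ∀ Z : Fin n → Finset R, (∀ i ∈ s, Z i ∈ (G.reorder σ).actions i) →
      ∀ i ∈ s.map σ.toEmbedding, (Z ∘ σ.symm) i ∈ G.actions i := by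
    intro Z hZ i hi
    obtain ⟨k, hk, rfl⟩ := mem_map.mp hi
    have hk : Z k ∈ G.actions (σ k) := hZ k hk
    simpa using hk
  rw [costOn_reorder, costOn_reorder]
  exact hgen _ _ _ (hmap X hX) (hmap Y hY) (σ j) (mem_map_of_mem _ hj) (by simpa using hne)

lemma IsNash.of_reorder {A : Fin n → Finset R} (h : (G.reorder σ).IsNash (A ∘ σ)) :
    G.IsNash A := by
  refine ⟨fun i => by simpa [reorder] using h.1 (σ.symm i), fun i B hB => ?_⟩
  have := h.2 (σ.symm i) B (by simpa [reorder] using hB)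
  rwa [← update_comp_equiv, cost_reorder, cost_reorder, Equiv.apply_symm_apply] at this

end Reorder

end CGame

theorem generic_singleton_costsharing_SPO_is_NE_general {R : Type} [DecidableEq R] [Fintype R]
    {n : ℕ} (G : CGame R n)
    (hsingle : ∀ i, ∀ A ∈ G.actions i, A.card = 1)
    (hanti : ∀ r, Antitone (G.delay r))
    (hgen : G.Generic)
    (A : Fin n → Finset R) (hA : CGame.IsSPOutcome G A) :
    G.IsNash A := by
  obtain ⟨σ, hσ⟩ := hA
  exact (hσ.isNash (fun i => hsingle (σ i)) hanti (hgen.reorder σ)).of_reorder σ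

/-- In a generic singleton cost-sharing game, every subgame-perfect
outcome (with respect to any order of the players) is a Nash equilibrium. -/
theorem generic_singleton_costsharing_SPO_is_NE {R : Type} [DecidableEq R] [Fintype R]
    {n : ℕ} (G : CGame R n)
    (hne : ∀ i, (G.actions i).Nonempty)
    (hsingle : ∀ i, ∀ A ∈ G.actions i, A.card = 1)
    (hanti : ∀ r, Antitone (G.delay r))
    (hnonneg : ∀ r m, 0 ≤ G.delay r m)
    (hgen : G.Generic)
    (A : Fin n → Finset R) (hA : CGame.IsSPOutcome G A) :
    G.IsNash A :=
  generic_singleton_costsharing_SPO_is_NE_general G hsingle hanti hgen A hA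
end
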